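/- arXiv:1212.0507 — 3 statements merged into one kernel-verified Lean document; each statement's English description precedes it below -/
import Mathlib

section
/- Let B(Ω) be a Bergman-type space. For all r, s ∈ ℝ the following quasi-identity holds: ∫_Ω |⟨K_z, K_w⟩|^{(r−s)/2} / ‖K_w‖^r dλ(w) ≍ ∫_Ω |⟨K_z, K_w⟩|^{(r+s)/2} / (‖K_z‖^s ‖K_w‖^r) dλ(w), where the implied constants are independent of z ∈ Ω (they may depend on r and s). -/
open MeasureTheory Filter Topology Set ENNReal

noncomputable section

/-- The ambient space `ℂⁿ`. -/
abbrev Cn (n : ℕ) := Fin n → ℂ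

/-- A Bergman-type space on a domain `Ω ⊆ ℂⁿ`, following Mitkovski--Wick.
The data consists of the domain `Ω`, the involutions `φ_z` (axiom A.1), the
quasi-invariant metric `d` (axiom A.2), the finite measure `σ` together with the
reproducing kernel `K` of the space of holomorphic functions in `L²(σ)` (axiom A.3),
the measure `λ = ‖K_z‖² dσ` (axiom A.4), the kernel quasi-identity (axiom A.5),
the Rudin--Forelli estimates with constant `κ` (axiom A.6), and the blow-up of
`‖K_z‖` at infinity (axiom A.7). -/
structure BergmanTypeSpace (n : ℕ) where
  Ω : Set (Cn n)
  isOpen_domain : IsOpen Ω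
  isConnected_domain : IsConnected Ω
  zero_mem : (0 : Cn n) ∈ Ω
  /- A.1 : involutive holomorphic automorphisms with `φ z 0 = z`. -/
  φ : Cn n → Cn n → Cn n
  φ_mapsTo : ∀ z ∈ Ω, Set.MapsTo (φ z) Ω Ω
  φ_holo : ∀ z ∈ Ω, DifferentiableOn ℂ (φ z) Ω
  φ_invol : ∀ z ∈ Ω, ∀ w ∈ Ω, φ z (φ z w) = w
  φ_zero : ∀ z ∈ Ω, φ z 0 = z
  /- A.2 : a quasi-invariant metric on `Ω`, separable and finitely compact. -/
  d : Cn n → Cn n → ℝ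
  d_nonneg : ∀ z ∈ Ω, ∀ w ∈ Ω, 0 ≤ d z w
  d_eq_zero_iff : ∀ z ∈ Ω, ∀ w ∈ Ω, (d z w = 0 ↔ z = w)
  d_symm : ∀ z ∈ Ω, ∀ w ∈ Ω, d z w = d w z
  d_triangle : ∀ u ∈ Ω, ∀ v ∈ Ω, ∀ w ∈ Ω, d u w ≤ d u v + d v w
  Cd : ℝ
  one_le_Cd : 1 ≤ Cd
  d_quasiInvariant : ∀ z ∈ Ω, ∀ u ∈ Ω, ∀ v ∈ Ω,
    d (φ z u) (φ z v) ≤ Cd * d u v ∧ d u v ≤ Cd * d (φ z u) (φ z v)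
  d_separable : ∃ s : Set (Cn n), s.Countable ∧ s ⊆ Ω ∧
    ∀ z ∈ Ω, ∀ ε : ℝ, 0 < ε → ∃ w ∈ s, d z w < ε
  d_finitelyCompact : ∀ z ∈ Ω, ∀ r : ℝ, ∀ f : ℕ → Cn n,
    (∀ m, f m ∈ Ω ∧ d z (f m) ≤ r) →
    ∃ w, (w ∈ Ω ∧ d z w ≤ r) ∧ ∃ g : ℕ → ℕ, StrictMono g ∧
      Filter.Tendsto (fun m => d w (f (g m))) Filter.atTop (nhds 0)
  /- A.3 : a finite measure carried by `Ω` for which the holomorphic functions in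
  `L²(σ)` form a reproducing kernel Hilbert space with kernel `K`. -/
  σ : Measure (Cn n)
  σ_finite : IsFiniteMeasure σ
  σ_carried : σ Ωᶜ = 0
  K : Cn n → Cn n → ℂ
  K_holo : ∀ z ∈ Ω, DifferentiableOn ℂ (K z) Ω
  K_memL2 : ∀ z ∈ Ω, MemLp (K z) 2 σ
  K_reproducing : ∀ f : Cn n → ℂ, DifferentiableOn ℂ f Ω → MemLp f 2 σ → ∀ z ∈ Ω,
    f z = ∫ w, f w * (starRingEnd ℂ) (K z w) ∂σ
  Knorm : Cn n → ℝ
  Knorm_def : ∀ z, Knorm z = Real.sqrt (∫ w, ‖K z w‖ ^ 2 ∂σ)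
  Knorm_pos : ∀ z ∈ Ω, 0 < Knorm z
  Knorm_continuous : ∀ z ∈ Ω, ∀ ε : ℝ, 0 < ε → ∃ δ : ℝ, 0 < δ ∧
    ∀ w ∈ Ω, d z w < δ → |Knorm w - Knorm z| < ε
  k : Cn n → Cn n → ℂ
  k_def : ∀ z w, k z w = K z w / (Knorm z : ℂ)
  /- A.4 : the measure `λ = ‖K_z‖² dσ` is quasi-invariant and doubling. -/
  lam : Measure (Cn n)
  lam_def : lam = σ.withDensity (fun z => ENNReal.ofReal (Knorm z ^ 2))
  Clam : ℝ≥0∞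
  Clam_lt_top : Clam < ⊤
  lam_quasiInvariant : ∀ z ∈ Ω, ∀ E : Set (Cn n), MeasurableSet E → E ⊆ Ω →
    lam E ≤ Clam * lam (Ω ∩ φ z ⁻¹' E) ∧ lam (Ω ∩ φ z ⁻¹' E) ≤ Clam * lam E
  Cdbl : ℝ≥0∞
  Cdbl_lt_top : Cdbl < ⊤
  lam_doubling : ∀ z ∈ Ω, ∀ r : ℝ, 0 < r →
    lam {w ∈ Ω | d z w < 2 * r} ≤ Cdbl * lam {w ∈ Ω | d z w < r}
  /- A.5 : `|⟨k_z, k_w⟩| ≃ 1 / ‖K_{φ_z(w)}‖`. -/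
  C5 : ℝ
  one_le_C5 : 1 ≤ C5
  kernel_quasi : ∀ z ∈ Ω, ∀ w ∈ Ω,
    ‖∫ u, k z u * (starRingEnd ℂ) (k w u) ∂σ‖ ≤ C5 * (1 / Knorm (φ z w)) ∧
    1 / Knorm (φ z w) ≤ C5 * ‖∫ u, k z u * (starRingEnd ℂ) (k w u) ∂σ‖
  /- A.6 : the Rudin--Forelli estimates, with constant `0 ≤ κ < 2`. -/
  κ : ℝ
  κ_nonneg : 0 ≤ κ
  κ_lt_two : κ < 2
  rudinForelli :
    (κ = 0 ∧ ∀ r : ℝ, 0 < r → ∃ C : ℝ≥0∞, C < ⊤ ∧ ∀ z ∈ Ω,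
      (∫⁻ w, (‖∫ u, K z u * (starRingEnd ℂ) (K w u) ∂σ‖₊ : ℝ≥0∞) ^ r /
        ((ENNReal.ofReal (Knorm z)) ^ r * (ENNReal.ofReal (Knorm w)) ^ r) ∂lam) ≤ C) ∨
    (0 < κ ∧ ∀ r s : ℝ, κ < r → 0 < s → s < κ → ∃ C : ℝ≥0∞, C < ⊤ ∧ ∀ z ∈ Ω,
      (∫⁻ w, (‖∫ u, K z u * (starRingEnd ℂ) (K w u) ∂σ‖₊ : ℝ≥0∞) ^ ((r + s) / 2) /
        ((ENNReal.ofReal (Knorm z)) ^ s * (ENNReal.ofReal (Knorm w)) ^ r) ∂lam) ≤ C)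
  /- A.7 : `‖K_z‖ → ∞` as `d(z,0) → ∞`. -/
  Knorm_atInfty : ∀ M : ℝ, ∃ R : ℝ, ∀ z ∈ Ω, R < d z 0 → M < Knorm z

namespace BergmanTypeSpace

variable {n : ℕ}

/-- Membership in the Bergman-type space `B(Ω)`: holomorphic on `Ω` and in `L²(σ)`. -/
def memB (S : BergmanTypeSpace n) (f : Cn n → ℂ) : Prop :=
  DifferentiableOn ℂ f S.Ω ∧ MemLp f 2 S.σ

/-- The `L²(Ω; dσ)` inner product. -/
def inn (S : BergmanTypeSpace n) (f g : Cn n → ℂ) : ℂ :=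
  ∫ w, f w * (starRingEnd ℂ) (g w) ∂S.σ

/-- The `L²(Ω; dσ)` norm. -/
def nrm (S : BergmanTypeSpace n) (f : Cn n → ℂ) : ℝ :=
  Real.sqrt (∫ w, ‖f w‖ ^ 2 ∂S.σ)

/-- The orthogonal projection `P f(z) = ∫ ⟨K_w, K_z⟩ f(w) dσ(w)`. -/
def P (S : BergmanTypeSpace n) (f : Cn n → ℂ) : Cn n → ℂ :=
  fun z => ∫ w, (S.inn (S.K w) (S.K z)) * f w ∂S.σ

/-- The Toeplitz operator `T_u = P M_u`. -/
def toeplitz (S : BergmanTypeSpace n) (u : Cn n → ℂ) (f : Cn n → ℂ) : Cn n → ℂ :=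
  S.P (fun w => u w * f w)

/-- The Hankel operator `H_u = (I - P) M_u`. -/
def hankel (S : BergmanTypeSpace n) (u : Cn n → ℂ) (f : Cn n → ℂ) : Cn n → ℂ :=
  fun w => u w * f w - S.P (fun x => u x * f x) w

/-- The adapted translation `U_z f(w) = f(φ_z(w)) k_z(w)`. -/
def U (S : BergmanTypeSpace n) (z : Cn n) (f : Cn n → ℂ) : Cn n → ℂ :=
  fun w => f (S.φ z w) * S.k z w

/-- The filter of points of `Ω` with `d(z,0) → ∞`. -/
def toInfty (S : BergmanTypeSpace n) : Filter (Cn n) :=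
  (Filter.atTop.comap (fun z => S.d z 0)) ⊓ Filter.principal S.Ω

/-- `Tad` is an adjoint of `T` as an operator on `B(Ω)`. -/
def IsAdjointPair (S : BergmanTypeSpace n) (T Tad : (Cn n → ℂ) → (Cn n → ℂ)) : Prop :=
  Set.MapsTo Tad {f | S.memB f} {f | S.memB f} ∧
  ∀ f g, S.memB f → S.memB g → S.inn (T f) g = S.inn f (Tad g)

/-- Compactness of an operator on `B(Ω)`: the image of any sequence in the unit ball
has a Cauchy (in `L²(σ)`) subsequence. -/
def IsCompactOp (S : BergmanTypeSpace n) (T : (Cn n → ℂ) → (Cn n → ℂ)) : Prop :=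
  Set.MapsTo T {f | S.memB f} {f | S.memB f} ∧
  ∀ f : ℕ → (Cn n → ℂ), (∀ m, S.memB (f m) ∧ S.nrm (f m) ≤ 1) →
    ∃ g : ℕ → ℕ, StrictMono g ∧ ∀ ε : ℝ, 0 < ε → ∃ N : ℕ, ∀ p ≥ N, ∀ q ≥ N,
      S.nrm (fun w => T (f (g p)) w - T (f (g q)) w) < ε

/-- The operator norm (of an operator defined on `B(Ω)`, with values in `L²(σ)`). -/
def opNorm (S : BergmanTypeSpace n) (T : (Cn n → ℂ) → (Cn n → ℂ)) : ℝ :=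
  sInf {C : ℝ | 0 ≤ C ∧ ∀ f, S.memB f → S.nrm (T f) ≤ C * S.nrm f}

/-- The essential norm `‖T‖ₑ = inf {‖T - A‖ : A compact}`. -/
def essNorm (S : BergmanTypeSpace n) (T : (Cn n → ℂ) → (Cn n → ℂ)) : ℝ :=
  sInf {c : ℝ | ∃ A, S.IsCompactOp A ∧ c = S.opNorm (fun f => fun w => T f w - A f w)}

/-- A strong Bergman-type space: equalities in axioms A.2, A.4 and A.5. -/
def IsStrong (S : BergmanTypeSpace n) : Prop :=
  (∀ z ∈ S.Ω, ∀ u ∈ S.Ω, ∀ v ∈ S.Ω, S.d (S.φ z u) (S.φ z v) = S.d u v) ∧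
  (∀ z ∈ S.Ω, ∀ E : Set (Cn n), MeasurableSet E → E ⊆ S.Ω →
    S.lam (S.Ω ∩ S.φ z ⁻¹' E) = S.lam E) ∧
  (∀ z ∈ S.Ω, ∀ w ∈ S.Ω, ‖S.inn (S.k z) (S.k w)‖ = 1 / S.Knorm (S.φ z w))

/-- A product `T_{u₁} T_{u₂} ⋯ T_{uₖ}` of Toeplitz operators. -/
def toeplitzProd (S : BergmanTypeSpace n) : List (Cn n → ℂ) → ((Cn n → ℂ) → (Cn n → ℂ))
  | [] => id
  | u :: us => fun f => S.toeplitz u (S.toeplitzProd us f)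

/-- Symbols in `L∞(Ω)` (bounded measurable on `Ω`). -/
def IsBoundedSymbol (S : BergmanTypeSpace n) (u : Cn n → ℂ) : Prop :=
  Measurable u ∧ ∃ M : ℝ, ∀ w ∈ S.Ω, ‖u w‖ ≤ M

/-- Symbols in `BUC(Ω,d)`: bounded and `d`-uniformly continuous on `Ω`. -/
def IsBUCSymbol (S : BergmanTypeSpace n) (u : Cn n → ℂ) : Prop :=
  S.IsBoundedSymbol u ∧
  ∀ ε : ℝ, 0 < ε → ∃ δ : ℝ, 0 < δ ∧ ∀ z ∈ S.Ω, ∀ w ∈ S.Ω, S.d z w < δ → ‖u z - u w‖ < ε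

/-- A finite sum of finite products of Toeplitz operators whose symbols all satisfy `Q`. -/
def IsToeplitzPolynomial (S : BergmanTypeSpace n) (Q : (Cn n → ℂ) → Prop)
    (A : (Cn n → ℂ) → (Cn n → ℂ)) : Prop :=
  ∃ (L : ℕ) (us : Fin L → List (Cn n → ℂ)),
    (∀ l, ∀ u ∈ us l, Q u) ∧ ∀ f x, A f x = ∑ l, S.toeplitzProd (us l) f x

/-- Membership in the norm closure of the finite sums of finite products of Toeplitz
operators with symbols satisfying `Q` (e.g. the Toeplitz algebra `𝒯_{L^∞}`). -/
def InToeplitzAlgebra (S : BergmanTypeSpace n) (Q : (Cn n → ℂ) → Prop)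
    (T : (Cn n → ℂ) → (Cn n → ℂ)) : Prop :=
  Set.MapsTo T {f | S.memB f} {f | S.memB f} ∧
  ∀ ε : ℝ, 0 < ε → ∃ A, S.IsToeplitzPolynomial Q A ∧
    ∀ f, S.memB f → S.nrm (fun x => T f x - A f x) ≤ ε * S.nrm f

end BergmanTypeSpace

/-!
By (A.5), `|⟨K_z, K_w⟩| ≍ ‖K_z‖ ‖K_w‖ / ‖K_{φ_z(w)}‖`. Substituting this into the integrand at `w`
and into the other integrand at `φ_z(w)`, both become comparable to
`‖K_z‖^{(r-s)/2} ‖K_w‖^{(s-r)/2} ‖K_{φ_z(w)}‖^{-(r+s)/2}`, so each integrand is bounded by a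
constant times the other composed with the involution `φ_z`. The quasi-invariance of `λ` (A.4)
turns these pointwise bounds into the two integral bounds.
-/

theorem Real.abs_log_sub_log_le_log {C x y : ℝ} (hx : 0 < x) (hy : 0 < y)
    (hxy : x ≤ C * y) (hyx : y ≤ C * x) : |Real.log x - Real.log y| ≤ Real.log C := by
  have hC : 0 < C := pos_of_mul_pos_left (hx.trans_le hxy) hy.le
  have h₁ := Real.log_le_log hx hxy
  have h₂ := Real.log_le_log hy hyx
  rw [Real.log_mul hC.ne' hy.ne'] at h₁
  rw [Real.log_mul hC.ne' hx.ne'] at h₂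
  exact abs_sub_le_iff.mpr ⟨by linarith, by linarith⟩

theorem mul_add_mul_le_of_abs_le {a b u v L : ℝ} (hu : |u| ≤ L) (hv : |v| ≤ L) :
    a * u + b * v ≤ (|a| + |b|) * L := by
  have hau : a * u ≤ |a| * L :=
    (le_abs_self _).trans ((abs_mul a u).trans_le (mul_le_mul_of_nonneg_left hu (abs_nonneg a)))
  have hbv : b * v ≤ |b| * L :=
    (le_abs_self _).trans ((abs_mul b v).trans_le (mul_le_mul_of_nonneg_left hv (abs_nonneg b)))
  linarith

namespace ENNReal

theorem ofReal_rpow_eq_ofReal_exp {x : ℝ} (hx : 0 < x) (p : ℝ) :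
    ENNReal.ofReal x ^ p = ENNReal.ofReal (Real.exp (p * Real.log x)) := by
  rw [ofReal_rpow_of_pos hx, Real.rpow_def_of_pos hx, mul_comm]

theorem ofReal_exp_mul_ofReal_exp (x y : ℝ) :
    ENNReal.ofReal (Real.exp x) * ENNReal.ofReal (Real.exp y) =
      ENNReal.ofReal (Real.exp (x + y)) := by
  rw [Real.exp_add, ofReal_mul (Real.exp_pos x).le]

theorem ofReal_exp_div_ofReal_exp (x y : ℝ) :
    ENNReal.ofReal (Real.exp x) / ENNReal.ofReal (Real.exp y) =
      ENNReal.ofReal (Real.exp (x - y)) := by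
  rw [Real.exp_sub, ofReal_div_of_pos (Real.exp_pos y)]

theorem ofReal_exp_le_mul_ofReal_exp {x y c : ℝ} (h : x ≤ c + y) :
    ENNReal.ofReal (Real.exp x) ≤ ENNReal.ofReal (Real.exp c) * ENNReal.ofReal (Real.exp y) := by
  rw [ofReal_exp_mul_ofReal_exp]
  exact ofReal_le_ofReal (Real.exp_le_exp.mpr h)

end ENNReal

namespace BergmanTypeSpace

variable {n : ℕ} (S : BergmanTypeSpace n)

def rudinForelliIntegrand (r s : ℝ) (z w : Cn n) : ℝ≥0∞ :=
  (‖S.inn (S.K z) (S.K w)‖₊ : ℝ≥0∞) ^ ((r + s) / 2) /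
    ((ENNReal.ofReal (S.Knorm z)) ^ s * (ENNReal.ofReal (S.Knorm w)) ^ r)

def kernelPowIntegrand (r s : ℝ) (z w : Cn n) : ℝ≥0∞ :=
  (‖S.inn (S.K z) (S.K w)‖₊ : ℝ≥0∞) ^ ((r - s) / 2) / (ENNReal.ofReal (S.Knorm w)) ^ r

theorem lam_compl_domain : S.lam S.Ωᶜ = 0 := by
  rw [S.lam_def, withDensity_apply _ S.isOpen_domain.measurableSet.compl]
  exact setLIntegral_measure_zero _ _ S.σ_carried

theorem ae_mem_domain : ∀ᵐ w ∂S.lam, w ∈ S.Ω :=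
  ae_iff.mpr S.lam_compl_domain

variable {S} {z : Cn n}

theorem aemeasurable_φ (hz : z ∈ S.Ω) : AEMeasurable (S.φ z) S.lam := by
  rw [← Measure.restrict_eq_self_of_ae_mem S.ae_mem_domain]
  exact (S.φ_holo z hz).continuousOn.aemeasurable S.isOpen_domain.measurableSet

theorem lam_le_smul_map_φ (hz : z ∈ S.Ω) : S.lam ≤ S.Clam • S.lam.map (S.φ z) := by
  refine Measure.le_iff.mpr fun E hE => ?_
  calc S.lam E = S.lam (E ∩ S.Ω) := (measure_inter_conull S.lam_compl_domain).symm
    _ ≤ S.Clam * S.lam (S.Ω ∩ S.φ z ⁻¹' (E ∩ S.Ω)) :=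
        (S.lam_quasiInvariant z hz _ (hE.inter S.isOpen_domain.measurableSet)
          inter_subset_right).1
    _ ≤ S.Clam * S.lam (S.φ z ⁻¹' E) := by
        gcongr
        exact fun w hw => hw.2.1
    _ = (S.Clam • S.lam.map (S.φ z)) E := by
        rw [Measure.smul_apply, Measure.map_apply_of_aemeasurable (aemeasurable_φ hz) hE,
          smul_eq_mul]

/-- Going through `λ ≤ C_λ • φ_z₊λ` and `φ_z ∘ φ_z = id` needs no measurability of `g`. -/
theorem lintegral_comp_φ_le (hz : z ∈ S.Ω) (g : Cn n → ℝ≥0∞) :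
    ∫⁻ w, g (S.φ z w) ∂S.lam ≤ S.Clam * ∫⁻ w, g w ∂S.lam :=
  calc ∫⁻ w, g (S.φ z w) ∂S.lam
      ≤ ∫⁻ w, g (S.φ z w) ∂(S.Clam • S.lam.map (S.φ z)) :=
        lintegral_mono' (lam_le_smul_map_φ hz) le_rfl
    _ = S.Clam * ∫⁻ w, g (S.φ z w) ∂S.lam.map (S.φ z) := lintegral_smul_measure _ _
    _ ≤ S.Clam * ∫⁻ w, g (S.φ z (S.φ z w)) ∂S.lam :=
        mul_le_mul_right (lintegral_map_le _ _) _
    _ = S.Clam * ∫⁻ w, g w ∂S.lam := by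
        congr 1
        refine lintegral_congr_ae ?_
        filter_upwards [S.ae_mem_domain] with w hw
        rw [S.φ_invol z hz w hw]

theorem lintegral_le_of_le_comp_φ (hz : z ∈ S.Ω) {f g : Cn n → ℝ≥0∞} {C : ℝ≥0∞} (hC : C ≠ ⊤)
    (hfg : ∀ w ∈ S.Ω, f w ≤ C * g (S.φ z w)) :
    ∫⁻ w, f w ∂S.lam ≤ C * S.Clam * ∫⁻ w, g w ∂S.lam :=
  calc ∫⁻ w, f w ∂S.lam ≤ ∫⁻ w, C * g (S.φ z w) ∂S.lam :=
        lintegral_mono_ae (S.ae_mem_domain.mono hfg)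
    _ = C * ∫⁻ w, g (S.φ z w) ∂S.lam := lintegral_const_mul' _ _ hC
    _ ≤ C * S.Clam * ∫⁻ w, g w ∂S.lam := by
        rw [mul_assoc]
        gcongr
        exact lintegral_comp_φ_le hz g

variable {w : Cn n}

theorem norm_inn_k (hz : z ∈ S.Ω) (hw : w ∈ S.Ω) :
    ‖S.inn (S.k z) (S.k w)‖ = ‖S.inn (S.K z) (S.K w)‖ / (S.Knorm z * S.Knorm w) := by
  have hinn : S.inn (S.k z) (S.k w) = S.inn (S.K z) (S.K w) / (S.Knorm z * S.Knorm w : ℂ) := by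
    simp only [inn, S.k_def, map_div₀, Complex.conj_ofReal, ← integral_div]
    congr 1
    ext u
    ring
  rw [hinn, norm_div, norm_mul, Complex.norm_real, Complex.norm_real, Real.norm_of_nonneg
    (S.Knorm_pos z hz).le, Real.norm_of_nonneg (S.Knorm_pos w hw).le]

theorem norm_inn_K_pos_and_abs_log_le (hz : z ∈ S.Ω) (hw : w ∈ S.Ω) :
    0 < ‖S.inn (S.K z) (S.K w)‖ ∧
      |Real.log ‖S.inn (S.K z) (S.K w)‖ + Real.log (S.Knorm (S.φ z w))
        - Real.log (S.Knorm z) - Real.log (S.Knorm w)| ≤ Real.log S.C5 := by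
  have hNz := S.Knorm_pos z hz
  have hNw := S.Knorm_pos w hw
  have hM := S.Knorm_pos _ (S.φ_mapsTo z hz hw)
  have hC5 : 0 < S.C5 := one_pos.trans_le S.one_le_C5
  obtain ⟨h₁, h₂⟩ := S.kernel_quasi z hz w hw
  change ‖S.inn (S.k z) (S.k w)‖ ≤ _ at h₁
  change _ ≤ S.C5 * ‖S.inn (S.k z) (S.k w)‖ at h₂
  rw [norm_inn_k hz hw] at h₁ h₂
  have ha : 0 < ‖S.inn (S.K z) (S.K w)‖ := by
    have := pos_of_mul_pos_right ((one_div_pos.mpr hM).trans_le h₂) hC5.le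
    exact (div_pos_iff_of_pos_right (mul_pos hNz hNw)).mp this
  refine ⟨ha, ?_⟩
  have := Real.abs_log_sub_log_le_log (div_pos ha (mul_pos hNz hNw)) (one_div_pos.mpr hM) h₁ h₂
  rw [Real.log_div ha.ne' (mul_pos hNz hNw).ne', Real.log_mul hNz.ne' hNw.ne', one_div,
    Real.log_inv] at this
  convert this using 2
  ring

theorem rudinForelliIntegrand_eq (r s : ℝ) (hz : z ∈ S.Ω) (hw : w ∈ S.Ω) :
    S.rudinForelliIntegrand r s z w = ENNReal.ofReal (Real.exp ((r + s) / 2 *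
      Real.log ‖S.inn (S.K z) (S.K w)‖ -
        (s * Real.log (S.Knorm z) + r * Real.log (S.Knorm w)))) := by
  rw [rudinForelliIntegrand, ← enorm_eq_nnnorm, ← ofReal_norm,
    ENNReal.ofReal_rpow_eq_ofReal_exp (norm_inn_K_pos_and_abs_log_le hz hw).1,
    ENNReal.ofReal_rpow_eq_ofReal_exp (S.Knorm_pos z hz),
    ENNReal.ofReal_rpow_eq_ofReal_exp (S.Knorm_pos w hw), ENNReal.ofReal_exp_mul_ofReal_exp,
    ENNReal.ofReal_exp_div_ofReal_exp]

theorem kernelPowIntegrand_eq (r s : ℝ) (hz : z ∈ S.Ω) (hw : w ∈ S.Ω) :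
    S.kernelPowIntegrand r s z w = ENNReal.ofReal (Real.exp ((r - s) / 2 *
      Real.log ‖S.inn (S.K z) (S.K w)‖ - r * Real.log (S.Knorm w))) := by
  rw [kernelPowIntegrand, ← enorm_eq_nnnorm, ← ofReal_norm,
    ENNReal.ofReal_rpow_eq_ofReal_exp (norm_inn_K_pos_and_abs_log_le hz hw).1,
    ENNReal.ofReal_rpow_eq_ofReal_exp (S.Knorm_pos w hw), ENNReal.ofReal_exp_div_ofReal_exp]

/- In logarithmic coordinates the two exponents differ by a combination, with coefficients
`±(r ± s)/2`, of the (A.5) defects `u` at `w` and `v` at `φ_z(w)`; the rest cancels. -/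
theorem rudinForelliIntegrand_le (r s : ℝ) (hz : z ∈ S.Ω) (hw : w ∈ S.Ω) :
    S.rudinForelliIntegrand r s z w ≤
      ENNReal.ofReal (Real.exp ((|(r + s) / 2| + |(r - s) / 2|) * Real.log S.C5)) *
        S.kernelPowIntegrand r s z (S.φ z w) := by
  have hw' := S.φ_mapsTo z hz hw
  have hu := (norm_inn_K_pos_and_abs_log_le hz hw).2
  have hv := (norm_inn_K_pos_and_abs_log_le hz hw').2
  rw [S.φ_invol z hz w hw] at hv
  rw [rudinForelliIntegrand_eq r s hz hw, kernelPowIntegrand_eq r s hz hw']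
  refine ENNReal.ofReal_exp_le_mul_ofReal_exp ?_
  have := mul_add_mul_le_of_abs_le (a := (r + s) / 2) (b := -((r - s) / 2)) hu hv
  rw [abs_neg] at this
  linarith

theorem kernelPowIntegrand_le (r s : ℝ) (hz : z ∈ S.Ω) (hw : w ∈ S.Ω) :
    S.kernelPowIntegrand r s z w ≤
      ENNReal.ofReal (Real.exp ((|(r + s) / 2| + |(r - s) / 2|) * Real.log S.C5)) *
        S.rudinForelliIntegrand r s z (S.φ z w) := by
  have hw' := S.φ_mapsTo z hz hw
  have hu := (norm_inn_K_pos_and_abs_log_le hz hw).2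
  have hv := (norm_inn_K_pos_and_abs_log_le hz hw').2
  rw [S.φ_invol z hz w hw] at hv
  rw [kernelPowIntegrand_eq r s hz hw, rudinForelliIntegrand_eq r s hz hw']
  refine ENNReal.ofReal_exp_le_mul_ofReal_exp ?_
  have := mul_add_mul_le_of_abs_le (a := (r - s) / 2) (b := -((r + s) / 2)) hu hv
  rw [abs_neg] at this
  linarith

end BergmanTypeSpace

/-- the Rudin–Forelli quasi-identity (Lemma 2.1 of the paper).
For all `r, s ∈ ℝ`,
`∫_Ω |⟨K_z,K_w⟩|^{(r−s)/2}/‖K_w‖^r dλ(w) ≍ ∫_Ω |⟨K_z,K_w⟩|^{(r+s)/2}/(‖K_z‖^s ‖K_w‖^r) dλ(w)`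
with constants independent of `z ∈ Ω`. -/
theorem statement0 (n : ℕ) (S : BergmanTypeSpace n) (r s : ℝ) :
    ∃ c : ℝ≥0∞, c < ⊤ ∧ ∀ z ∈ S.Ω,
      (∫⁻ w, (‖S.inn (S.K z) (S.K w)‖₊ : ℝ≥0∞) ^ ((r - s) / 2) /
          (ENNReal.ofReal (S.Knorm w)) ^ r ∂S.lam) ≤
        c * (∫⁻ w, (‖S.inn (S.K z) (S.K w)‖₊ : ℝ≥0∞) ^ ((r + s) / 2) /
          ((ENNReal.ofReal (S.Knorm z)) ^ s * (ENNReal.ofReal (S.Knorm w)) ^ r) ∂S.lam) ∧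
      (∫⁻ w, (‖S.inn (S.K z) (S.K w)‖₊ : ℝ≥0∞) ^ ((r + s) / 2) /
          ((ENNReal.ofReal (S.Knorm z)) ^ s * (ENNReal.ofReal (S.Knorm w)) ^ r) ∂S.lam) ≤
        c * (∫⁻ w, (‖S.inn (S.K z) (S.K w)‖₊ : ℝ≥0∞) ^ ((r - s) / 2) /
          (ENNReal.ofReal (S.Knorm w)) ^ r ∂S.lam) := by
  refine ⟨ENNReal.ofReal (Real.exp ((|(r + s) / 2| + |(r - s) / 2|) * Real.log S.C5)) * S.Clam,
    ENNReal.mul_lt_top ENNReal.ofReal_lt_top S.Clam_lt_top, fun z hz => ⟨?_, ?_⟩⟩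
  · exact BergmanTypeSpace.lintegral_le_of_le_comp_φ hz ENNReal.ofReal_ne_top
      fun w hw => BergmanTypeSpace.kernelPowIntegrand_le r s hz hw
  · exact BergmanTypeSpace.lintegral_le_of_le_comp_φ hz ENNReal.ofReal_ne_top
      fun w hw => BergmanTypeSpace.rudinForelliIntegrand_le r s hz hw
end
end

section
/- Let B(Ω) be a Bergman-type space with κ = 0, and let P f(z) := ∫_Ω ⟨K_w, K_z⟩ f(w) dσ(w) be the projection operator. Then P is bounded as an operator from L^p(Ω; dλ(w)/‖K_w‖^p) into L^p(Ω; dλ(w)/‖K_w‖^p) for all 1 ≤ p ≤ ∞ (here dλ(w)/‖K_w‖^p = ‖K_w‖^{2−p} dσ(w), and for p = ∞ the norm is sup_{w∈Ω} |f(w)|/‖K_w‖). -/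
open MeasureTheory Filter Topology Set ENNReal

noncomputable section

/-!
Write `u = |f| / ‖K‖`. The weighted `L^p` norm of `f` is the `L^p(λ)` norm of `u`, and
`|P f(z)| / ‖K_z‖ ≤ ∫ k(z,w) u(w) dλ(w)` for the symmetric kernel
`k(z,w) = |⟨K_z, K_w⟩| / (‖K_z‖ ‖K_w‖)`. For `κ = 0` the Rudin–Forelli estimate with `r = s = 1`
says exactly that `∫ k(z,·) dλ` is bounded uniformly in `z`, so Schur's test bounds `P` on every
weighted `L^p`, `1 ≤ p < ∞`; for `p = ∞` the same row bound applies directly.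
-/

theorem ENNReal.sq_mul_div_mul_mul_div {a b x y : ℝ≥0∞} (hx0 : x ≠ 0) (hxt : x ≠ ⊤) (hy0 : y ≠ 0)
    (hyt : y ≠ ⊤) : x ^ 2 * (a / (y * x) * (b / x)) = a * b / y := by
  rw [ENNReal.div_eq_inv_mul, ENNReal.div_eq_inv_mul, ENNReal.div_eq_inv_mul,
    ENNReal.mul_inv (Or.inl hy0) (Or.inl hyt)]
  have hx : x ^ 2 * x⁻¹ * x⁻¹ = 1 := by
    rw [sq, mul_assoc x, ENNReal.mul_inv_cancel hx0 hxt, mul_one, ENNReal.mul_inv_cancel hx0 hxt]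
  calc _ = (x ^ 2 * x⁻¹ * x⁻¹) * (y⁻¹ * (a * b)) := by ring
    _ = _ := by rw [hx, one_mul]

theorem ENNReal.ofReal_rpow_two_sub_mul_rpow {x : ℝ} (hx : 0 < x) (b : ℝ≥0∞) {p : ℝ} (hp : 0 < p) :
    ENNReal.ofReal (x ^ (2 - p)) * b ^ p = ENNReal.ofReal x ^ 2 * (b / ENNReal.ofReal x) ^ p := by
  have hx0 : ENNReal.ofReal x ≠ 0 := by simpa using hx
  rw [← ENNReal.ofReal_rpow_of_pos hx, ENNReal.div_rpow_of_nonneg _ _ hp.le,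
    ENNReal.rpow_sub _ _ hx0 ofReal_ne_top, ENNReal.rpow_two, ← ENNReal.mul_div_right_comm,
    mul_div_assoc]

theorem lintegral_mul_rpow_le {α : Type*} [MeasurableSpace α] {μ : Measure α}
    {k u : α → ℝ≥0∞} (hk : AEMeasurable k μ) (hu : AEMeasurable u μ) {p : ℝ} (hp : 1 ≤ p) :
    (∫⁻ x, k x * u x ∂μ) ^ p ≤ (∫⁻ x, k x ∂μ) ^ (p - 1) * ∫⁻ x, k x * u x ^ p ∂μ := by
  rcases hp.eq_or_lt with rfl | hp
  · simp
  have hpq := Real.HolderConjugate.conjExponent hp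
  set q := p.conjExponent
  have hp0 : 0 < p := hpq.pos
  have hq0 : 0 < q := hpq.symm.pos
  have hsplit : ∀ x, k x * u x = k x ^ (1 / q) * (k x ^ (1 / p) * u x) := fun x => by
    rw [← mul_assoc, ← ENNReal.rpow_add_of_nonneg _ _ (by positivity) (by positivity),
      hpq.symm.one_div_add_one_div, one_div_one, ENNReal.rpow_one]
  have holder := ENNReal.lintegral_mul_le_Lp_mul_Lq μ hpq.symm (hk.pow_const (1 / q))
    ((hk.pow_const (1 / p)).mul hu)
  simp only [Pi.mul_apply, ← hsplit, ← ENNReal.rpow_mul, ENNReal.mul_rpow_of_nonneg _ _ hp0.le,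
    one_div_mul_cancel hq0.ne', one_div_mul_cancel hp0.ne', ENNReal.rpow_one] at holder
  calc (∫⁻ x, k x * u x ∂μ) ^ p
      ≤ ((∫⁻ x, k x ∂μ) ^ (1 / q) * (∫⁻ x, k x * u x ^ p ∂μ) ^ (1 / p)) ^ p :=
        ENNReal.rpow_le_rpow holder hp0.le
    _ = (∫⁻ x, k x ∂μ) ^ (p - 1) * ∫⁻ x, k x * u x ^ p ∂μ := by
        rw [ENNReal.mul_rpow_of_nonneg _ _ hp0.le, ← ENNReal.rpow_mul, ← ENNReal.rpow_mul,
          one_div_mul_cancel hp0.ne', ENNReal.rpow_one, ← hpq.div_conj_eq_sub_one,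
          one_div_mul_eq_div]

theorem lintegral_rpow_lintegral_mul_le_of_schur {α : Type*} [MeasurableSpace α] {μ : Measure α}
    [SFinite μ] {k : α → α → ℝ≥0∞} (hk : Measurable (Function.uncurry k)) {C : ℝ≥0∞}
    (hrow : ∀ᵐ x ∂μ, ∫⁻ y, k x y ∂μ ≤ C) (hcol : ∀ᵐ y ∂μ, ∫⁻ x, k x y ∂μ ≤ C)
    {u : α → ℝ≥0∞} (hu : AEMeasurable u μ) {p : ℝ} (hp : 1 ≤ p) :
    ∫⁻ x, (∫⁻ y, k x y * u y ∂μ) ^ p ∂μ ≤ C ^ p * ∫⁻ y, u y ^ p ∂μ := by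
  have hp0 : 0 ≤ p - 1 := sub_nonneg.2 hp
  have hup : AEMeasurable (fun y => u y ^ p) μ := hu.pow_const p
  have hkup : AEMeasurable (Function.uncurry fun x y => k x y * u y ^ p) (μ.prod μ) :=
    hk.aemeasurable.mul (hup.comp_quasiMeasurePreserving Measure.quasiMeasurePreserving_snd)
  calc ∫⁻ x, (∫⁻ y, k x y * u y ∂μ) ^ p ∂μ
      ≤ ∫⁻ x, C ^ (p - 1) * ∫⁻ y, k x y * u y ^ p ∂μ ∂μ := by
        refine lintegral_mono_ae (hrow.mono fun x hx => ?_)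
        grw [lintegral_mul_rpow_le hk.of_uncurry_left.aemeasurable hu hp, hx]
    _ = C ^ (p - 1) * ∫⁻ y, (∫⁻ x, k x y ∂μ) * u y ^ p ∂μ := by
        rw [lintegral_const_mul'' _ (f := fun x => ∫⁻ y, k x y * u y ^ p ∂μ)
          hkup.lintegral_prod_right', lintegral_lintegral_swap hkup]
        simp_rw [lintegral_mul_const'' _ hk.of_uncurry_right.aemeasurable]
    _ ≤ C ^ (p - 1) * ∫⁻ y, C * u y ^ p ∂μ := by
        gcongr C ^ (p - 1) * ?_
        exact lintegral_mono_ae (hcol.mono fun y hy => by gcongr)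
    _ = C ^ p * ∫⁻ y, u y ^ p ∂μ := by
        rw [lintegral_const_mul'' _ hup, ← mul_assoc]
        nth_rewrite 2 [← ENNReal.rpow_one C]
        rw [← ENNReal.rpow_add_of_nonneg _ _ hp0 zero_le_one, sub_add_cancel]

namespace BergmanTypeSpace

variable {n : ℕ} (S : BergmanTypeSpace n)

lemma ae_mem_domain_s1 : ∀ᵐ z ∂S.σ, z ∈ S.Ω := S.σ_carried

lemma inn_conj_symm (f g : Cn n → ℂ) : S.inn g f = starRingEnd ℂ (S.inn f g) := by
  simp only [inn, ← integral_conj, map_mul, Complex.conj_conj, mul_comm]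

/-- `K` is only known to be separately continuous on `Ω × Ω`, and `Knorm` only `d`-continuous;
extending `K` by zero off `Ω × Ω` through the subtype embedding makes it jointly measurable, and
on `Ω` its diagonal recovers `Knorm z = √(K z z)` (see `Knorm_eq_sqrt_re_K`). -/
def Kext : Cn n × Cn n → ℂ :=
  Function.extend (Prod.map ((↑) : S.Ω → Cn n) ((↑) : S.Ω → Cn n)) (fun p => S.K p.1 p.2) 0

def KnormExt (z : Cn n) : ℝ := Real.sqrt (S.Kext (z, z)).re

def normalizedKernel (z w : Cn n) : ℝ≥0∞ :=
  ‖S.Kext (z, w)‖ₑ / (ENNReal.ofReal (S.KnormExt z) * ENNReal.ofReal (S.KnormExt w))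

lemma lam_absolutelyContinuous : S.lam ≪ S.σ := by
  rw [S.lam_def]
  exact withDensity_absolutelyContinuous _ _

lemma ae_lam_mem_domain : ∀ᵐ z ∂S.lam, z ∈ S.Ω :=
  S.lam_absolutelyContinuous.ae_le S.ae_mem_domain_s1

instance : SFinite S.lam := by
  have := S.σ_finite
  rw [S.lam_def]
  infer_instance

variable {S}

lemma inn_K_K {z w : Cn n} (hz : z ∈ S.Ω) (hw : w ∈ S.Ω) : S.inn (S.K z) (S.K w) = S.K z w :=
  (S.K_reproducing (S.K z) (S.K_holo z hz) (S.K_memL2 z hz) w hw).symm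

lemma K_comm {z w : Cn n} (hz : z ∈ S.Ω) (hw : w ∈ S.Ω) : S.K w z = starRingEnd ℂ (S.K z w) := by
  rw [← inn_K_K hw hz, ← inn_K_K hz hw, inn_conj_symm]

lemma Knorm_eq_sqrt_re_K {z : Cn n} (hz : z ∈ S.Ω) : S.Knorm z = Real.sqrt (S.K z z).re := by
  rw [S.Knorm_def, ← inn_K_K hz hz, inn]
  simp_rw [Complex.mul_conj, Complex.normSq_eq_norm_sq]
  rw [integral_complex_ofReal, Complex.ofReal_re]

lemma Kext_apply {z w : Cn n} (hz : z ∈ S.Ω) (hw : w ∈ S.Ω) : S.Kext (z, w) = S.K z w :=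
  (Subtype.val_injective.prodMap Subtype.val_injective).extend_apply _ _ (⟨z, hz⟩, ⟨w, hw⟩)

lemma KnormExt_eq {z : Cn n} (hz : z ∈ S.Ω) : S.KnormExt z = S.Knorm z := by
  rw [KnormExt, Kext_apply hz hz, Knorm_eq_sqrt_re_K hz]

lemma normalizedKernel_apply {z w : Cn n} (hz : z ∈ S.Ω) (hw : w ∈ S.Ω) :
    S.normalizedKernel z w =
      ‖S.K z w‖ₑ / (ENNReal.ofReal (S.Knorm z) * ENNReal.ofReal (S.Knorm w)) := by
  rw [normalizedKernel, Kext_apply hz hw, KnormExt_eq hz, KnormExt_eq hw]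

lemma normalizedKernel_comm {z w : Cn n} (hz : z ∈ S.Ω) (hw : w ∈ S.Ω) :
    S.normalizedKernel w z = S.normalizedKernel z w := by
  rw [normalizedKernel_apply hw hz, normalizedKernel_apply hz hw, K_comm hz hw, RCLike.enorm_conj,
    mul_comm]

variable (S)

lemma measurable_Kext : Measurable S.Kext := by
  have hΩ : MeasurableSet S.Ω := S.isOpen_domain.measurableSet
  have he : MeasurableEmbedding (Prod.map ((↑) : S.Ω → Cn n) ((↑) : S.Ω → Cn n)) :=
    (MeasurableEmbedding.subtype_coe hΩ).prodMap (MeasurableEmbedding.subtype_coe hΩ)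
  have hcont : ∀ z ∈ S.Ω, Continuous (S.Ω.domRestrict (S.K z)) := fun z hz =>
    (S.K_holo z hz).continuousOn.domRestrict
  have hK : StronglyMeasurable (Function.uncurry fun z w : S.Ω => S.K z w) := by
    refine stronglyMeasurable_uncurry_of_continuous_of_stronglyMeasurable (fun w => ?_)
      (fun z => (hcont z z.2).stronglyMeasurable)
    have hconj : (fun z : S.Ω => S.K z w) = fun z => starRingEnd ℂ (S.Ω.domRestrict (S.K w) z) :=
      funext fun z => K_comm w.2 z.2
    rw [hconj]
    exact Complex.continuous_conj.comp (hcont w w.2)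
  exact he.measurable_extend hK.measurable measurable_const

lemma measurable_KnormExt : Measurable S.KnormExt :=
  Real.continuous_sqrt.measurable.comp
    (Complex.measurable_re.comp (S.measurable_Kext.comp (measurable_id.prodMk measurable_id)))

lemma measurable_normalizedKernel : Measurable (Function.uncurry S.normalizedKernel) :=
  S.measurable_Kext.enorm.div ((S.measurable_KnormExt.ennreal_ofReal.comp measurable_fst).mul
    (S.measurable_KnormExt.ennreal_ofReal.comp measurable_snd))

lemma aemeasurable_Knorm : AEMeasurable S.Knorm S.σ :=
  S.measurable_KnormExt.aemeasurable.congr (S.ae_mem_domain_s1.mono fun _ hz => KnormExt_eq hz)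

lemma lintegral_lam (g : Cn n → ℝ≥0∞) :
    ∫⁻ z, g z ∂S.lam = ∫⁻ z, ENNReal.ofReal (S.Knorm z) ^ 2 * g z ∂S.σ := by
  have hdens : AEMeasurable (fun z => ENNReal.ofReal (S.Knorm z ^ 2)) S.σ :=
    (S.aemeasurable_Knorm.pow_const 2).ennreal_ofReal
  rw [S.lam_def, lintegral_withDensity_eq_lintegral_mul_non_measurable₀ _ hdens
    (ae_of_all _ fun _ => ENNReal.ofReal_lt_top)]
  refine lintegral_congr_ae (S.ae_mem_domain_s1.mono fun z hz => ?_)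
  rw [Pi.mul_apply, ENNReal.ofReal_pow (S.Knorm_pos z hz).le]

lemma eLpNorm_withDensity_Knorm_rpow_eq (g : Cn n → ℂ) {p : ℝ} (hp : 0 < p) :
    eLpNorm g (ENNReal.ofReal p)
        (S.σ.withDensity fun w => ENNReal.ofReal (S.Knorm w ^ ((2:ℝ) - p))) =
      (∫⁻ w, (‖g w‖ₑ / ENNReal.ofReal (S.Knorm w)) ^ p ∂S.lam) ^ (1 / p) := by
  have hdens : AEMeasurable (fun w => ENNReal.ofReal (S.Knorm w ^ ((2:ℝ) - p))) S.σ :=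
    (S.aemeasurable_Knorm.pow_const _).ennreal_ofReal
  rw [eLpNorm_eq_lintegral_rpow_enorm_toReal (by simpa using hp) ofReal_ne_top,
    ENNReal.toReal_ofReal hp.le, lintegral_withDensity_eq_lintegral_mul_non_measurable₀ _ hdens
      (ae_of_all _ fun _ => ENNReal.ofReal_lt_top), lintegral_lam]
  congr 1
  refine lintegral_congr_ae ?_
  filter_upwards [S.ae_mem_domain_s1] with w hw
  exact ENNReal.ofReal_rpow_two_sub_mul_rpow (S.Knorm_pos w hw) _ hp

variable {S}

lemma lintegral_normalizedKernel_le (hκ : S.κ = 0) :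
    ∃ C < ⊤, ∀ z ∈ S.Ω, ∫⁻ w, S.normalizedKernel z w ∂S.lam ≤ C := by
  rcases S.rudinForelli with ⟨-, hRF⟩ | ⟨hκpos, -⟩
  · obtain ⟨C, hC, hbound⟩ := hRF 1 one_pos
    refine ⟨C, hC, fun z hz => (lintegral_congr_ae ?_).trans_le (hbound z hz)⟩
    filter_upwards [S.ae_lam_mem_domain] with w hw
    rw [normalizedKernel_apply hz hw, ← inn_K_K hz hw]
    simp only [ENNReal.rpow_one, enorm_eq_nnnorm, inn]
  · exact absurd hκ hκpos.ne'

lemma enorm_P_div_le (f : Cn n → ℂ) {z : Cn n} (hz : z ∈ S.Ω) :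
    ‖S.P f z‖ₑ / ENNReal.ofReal (S.Knorm z) ≤
      ∫⁻ w, S.normalizedKernel z w * (‖f w‖ₑ / ENNReal.ofReal (S.Knorm w)) ∂S.lam := by
  have hN : ∀ w ∈ S.Ω, ENNReal.ofReal (S.Knorm w) ≠ 0 := fun w hw => by
    simpa using S.Knorm_pos w hw
  calc ‖S.P f z‖ₑ / ENNReal.ofReal (S.Knorm z)
      ≤ (∫⁻ w, ‖S.K z w‖ₑ * ‖f w‖ₑ ∂S.σ) / ENNReal.ofReal (S.Knorm z) := by
        gcongr
        refine (enorm_integral_le_lintegral_enorm _).trans_eq (lintegral_congr_ae ?_)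
        filter_upwards [S.ae_mem_domain_s1] with w hw
        rw [enorm_mul, inn_K_K hw hz, K_comm hz hw, RCLike.enorm_conj]
    _ = ∫⁻ w, ‖S.K z w‖ₑ * ‖f w‖ₑ / ENNReal.ofReal (S.Knorm z) ∂S.σ := by
        simp_rw [div_eq_mul_inv]
        exact (lintegral_mul_const' _ _ (ENNReal.inv_ne_top.2 (hN z hz))).symm
    _ = ∫⁻ w, S.normalizedKernel z w * (‖f w‖ₑ / ENNReal.ofReal (S.Knorm w)) ∂S.lam := by
        rw [lintegral_lam]
        refine lintegral_congr_ae ?_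
        filter_upwards [S.ae_mem_domain_s1] with w hw
        rw [normalizedKernel_apply hz hw, ENNReal.sq_mul_div_mul_mul_div (hN w hw) ofReal_ne_top
          (hN z hz) ofReal_ne_top]

lemma eLpNorm_P_le {C : ℝ≥0∞} (hrow : ∀ z ∈ S.Ω, ∫⁻ w, S.normalizedKernel z w ∂S.lam ≤ C)
    {p : ℝ} (hp : 1 ≤ p) {f : Cn n → ℂ} (hf : AEStronglyMeasurable f S.σ) :
    eLpNorm (S.P f) (ENNReal.ofReal p)
        (S.σ.withDensity fun w => ENNReal.ofReal (S.Knorm w ^ ((2:ℝ) - p))) ≤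
      C * eLpNorm f (ENNReal.ofReal p)
        (S.σ.withDensity fun w => ENNReal.ofReal (S.Knorm w ^ ((2:ℝ) - p))) := by
  have hp0 : 0 < p := zero_lt_one.trans_le hp
  set u : Cn n → ℝ≥0∞ := fun w => ‖f w‖ₑ / ENNReal.ofReal (S.Knorm w)
  have hu : AEMeasurable u S.lam :=
    (hf.enorm.div S.aemeasurable_Knorm.ennreal_ofReal).mono_ac S.lam_absolutelyContinuous
  have hcol : ∀ᵐ w ∂S.lam, ∫⁻ z, S.normalizedKernel z w ∂S.lam ≤ C := by
    filter_upwards [S.ae_lam_mem_domain] with w hw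
    refine (lintegral_congr_ae ?_).trans_le (hrow w hw)
    filter_upwards [S.ae_lam_mem_domain] with z hz
    exact normalizedKernel_comm hw hz
  rw [S.eLpNorm_withDensity_Knorm_rpow_eq _ hp0, S.eLpNorm_withDensity_Knorm_rpow_eq _ hp0]
  calc (∫⁻ z, (‖S.P f z‖ₑ / ENNReal.ofReal (S.Knorm z)) ^ p ∂S.lam) ^ (1 / p)
      ≤ (∫⁻ z, (∫⁻ w, S.normalizedKernel z w * u w ∂S.lam) ^ p ∂S.lam) ^ (1 / p) := by
        gcongr ?_ ^ _
        refine lintegral_mono_ae ?_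
        filter_upwards [S.ae_lam_mem_domain] with z hz
        gcongr
        exact enorm_P_div_le f hz
    _ ≤ (C ^ p * ∫⁻ w, u w ^ p ∂S.lam) ^ (1 / p) := by
        gcongr
        exact lintegral_rpow_lintegral_mul_le_of_schur S.measurable_normalizedKernel
          (S.ae_lam_mem_domain.mono hrow) hcol hu hp
    _ = C * (∫⁻ w, u w ^ p ∂S.lam) ^ (1 / p) := by
        rw [ENNReal.mul_rpow_of_nonneg _ _ (by positivity), ← ENNReal.rpow_mul,
          mul_one_div_cancel hp0.ne', ENNReal.rpow_one]

lemma norm_P_le {C : ℝ≥0∞} (hC : C ≠ ⊤)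
    (hrow : ∀ z ∈ S.Ω, ∫⁻ w, S.normalizedKernel z w ∂S.lam ≤ C) (f : Cn n → ℂ) {M : ℝ}
    (hM : ∀ w ∈ S.Ω, ‖f w‖ ≤ M * S.Knorm w) {z : Cn n} (hz : z ∈ S.Ω) :
    ‖S.P f z‖ ≤ C.toReal * M * S.Knorm z := by
  have hM0 : 0 ≤ M := nonneg_of_mul_nonneg_left ((norm_nonneg _).trans (hM 0 S.zero_mem))
    (S.Knorm_pos 0 S.zero_mem)
  have hu : ∀ᵐ w ∂S.lam, ‖f w‖ₑ / ENNReal.ofReal (S.Knorm w) ≤ ENNReal.ofReal M := by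
    filter_upwards [S.ae_lam_mem_domain] with w hw
    refine ENNReal.div_le_of_le_mul ?_
    rw [← ofReal_norm, ← ENNReal.ofReal_mul hM0]
    exact ENNReal.ofReal_le_ofReal (hM w hw)
  have hPz : ‖S.P f z‖ₑ / ENNReal.ofReal (S.Knorm z) ≤ C * ENNReal.ofReal M :=
    calc ‖S.P f z‖ₑ / ENNReal.ofReal (S.Knorm z)
        ≤ ∫⁻ w, S.normalizedKernel z w * ENNReal.ofReal M ∂S.lam :=
          (enorm_P_div_le f hz).trans (lintegral_mono_ae (hu.mono fun w hw => by gcongr))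
      _ ≤ C * ENNReal.ofReal M := by
          rw [lintegral_mul_const' _ _ ofReal_ne_top]
          gcongr
          exact hrow z hz
  rw [ENNReal.div_le_iff (by simpa using S.Knorm_pos z hz) ofReal_ne_top,
    ← ofReal_norm, ← ENNReal.ofReal_toReal hC, ← ENNReal.ofReal_mul ENNReal.toReal_nonneg,
    ← ENNReal.ofReal_mul (by positivity)] at hPz
  exact (ENNReal.ofReal_le_ofReal_iff (by positivity [S.Knorm_pos z hz])).1 hPz

end BergmanTypeSpace

/-- for `κ = 0` the projection `P` is bounded on
`L^p(Ω; dλ(w)/‖K_w‖^p) = L^p(Ω; ‖K_w‖^{2-p} dσ(w))` for all `1 ≤ p ≤ ∞`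
(the case `p = ∞` being the weighted sup-norm statement). -/
theorem statement1 (n : ℕ) (S : BergmanTypeSpace n) (hκ : S.κ = 0) :
    (∀ p : ℝ, 1 ≤ p →
      ∃ C : ℝ≥0∞, C < ⊤ ∧ ∀ f : Cn n → ℂ, AEStronglyMeasurable f S.σ →
        eLpNorm (S.P f) (ENNReal.ofReal p)
            (S.σ.withDensity fun w => ENNReal.ofReal (S.Knorm w ^ ((2:ℝ) - p))) ≤
          C * eLpNorm f (ENNReal.ofReal p)
            (S.σ.withDensity fun w => ENNReal.ofReal (S.Knorm w ^ ((2:ℝ) - p)))) ∧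
    (∃ C : ℝ, 0 ≤ C ∧ ∀ f : Cn n → ℂ, AEStronglyMeasurable f S.σ → ∀ M : ℝ,
      (∀ w ∈ S.Ω, ‖f w‖ ≤ M * S.Knorm w) → ∀ z ∈ S.Ω, ‖S.P f z‖ ≤ C * M * S.Knorm z) := by
  obtain ⟨C, hC, hrow⟩ := S.lintegral_normalizedKernel_le hκ
  exact ⟨fun p hp => ⟨C, hC, fun f hf => S.eLpNorm_P_le hrow hp hf⟩,
    ⟨C.toReal, ENNReal.toReal_nonneg, fun f _ M hM z hz => S.norm_P_le hC.ne hrow f hM hz⟩⟩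
end
end

section
/- Let B(Ω) be a strong Bergman-type space and let u ∈ BUC(Ω,d). For any sequence {z_n} in Ω, the sequence of Toeplitz operators T_{u∘φ_{z_n}} has a subnet that converges in the strong operator topology of bounded operators on B(Ω). -/
open MeasureTheory Filter Topology Set ENNReal

noncomputable section

/-!
A diagonal argument over a countable `d`-dense subset of `Ω` gives a subsequence along which
`u ∘ φ_{z_j}` converges there; as every `φ_z` is a `d`-isometry, these translates are uniformly
`d`-equicontinuous, so the subsequence converges at every point of `Ω`, to a bounded `v`. By
dominated convergence `(u ∘ φ_{z_j} - v) f → 0` in `L²(σ)` along it, and `P` is a contraction,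
so `T_{u ∘ φ_{z_j}} f → T_v f` for every `f`.

What remains is that `T_v` maps `B(Ω)` into itself. For `h ∈ L²(σ)`, `P h (x) = ⟨h, K_x⟩` is,
almost everywhere, the orthogonal projection of `h` onto the closed span of the kernels, and it
is holomorphic as a locally uniform limit of finite combinations of kernels. Local uniformity
needs `‖K_x‖` to be locally bounded: it is lower semicontinuous, hence bounded near some point
by Baire's theorem, and the identity `‖K_{φ_z(w)}‖ |K_z(w)| = ‖K_z‖ ‖K_w‖` (A.5 with equality)
carries such a bound to every point.
-/

section
variable {E F : Type*} [NormedAddCommGroup E] [NormedSpace ℂ E] [NormedAddCommGroup F]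
  [NormedSpace ℂ F]

theorem norm_fderiv_le_of_forall_mem_closedBall_norm_le {f : E → F} {x : E} {r C : ℝ}
    (hr : 0 < r) (hf : DifferentiableOn ℂ f (Metric.closedBall x r))
    (hC : ∀ y ∈ Metric.closedBall x r, ‖f y‖ ≤ C) :
    ‖fderiv ℂ f x‖ ≤ C / r := by
  have hfx : DifferentiableAt ℂ f x :=
    hf.differentiableAt (Metric.closedBall_mem_nhds x hr)
  have hC0 : 0 ≤ C := (norm_nonneg _).trans (hC x (Metric.mem_closedBall_self hr.le))
  refine ContinuousLinearMap.opNorm_le_bound _ (by positivity) fun v => ?_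
  rcases eq_or_ne v 0 with rfl | hv
  · simp
  have hv' : 0 < ‖v‖ := norm_pos_iff.mpr hv
  -- Cauchy's estimate for the one-variable slice `ζ ↦ f (x + ζ v)` on the disc of radius `r / ‖v‖`
  have hmaps : MapsTo (fun ζ : ℂ => x + ζ • v) (Metric.closedBall 0 (r / ‖v‖))
      (Metric.closedBall x r) := by
    intro ζ hζ
    rw [Metric.mem_closedBall, dist_self_add_left, norm_smul]
    rw [mem_closedBall_zero_iff] at hζ
    calc ‖ζ‖ * ‖v‖ ≤ r / ‖v‖ * ‖v‖ := by gcongr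
      _ = r := div_mul_cancel₀ r hv'.ne'
  have hslice : DiffContOnCl ℂ (fun ζ : ℂ => f (x + ζ • v)) (Metric.ball 0 (r / ‖v‖)) := by
    refine DifferentiableOn.diffContOnCl ?_
    rw [closure_ball (0 : ℂ) (div_pos hr hv').ne']
    exact hf.comp ((differentiable_id.smul_const v).const_add x).differentiableOn hmaps
  have hderiv : HasDerivAt (fun ζ : ℂ => f (x + ζ • v)) (fderiv ℂ f x v) 0 := by
    have hline : HasDerivAt (fun ζ : ℂ => x + ζ • v) v 0 := by
      simpa using ((hasDerivAt_id (0 : ℂ)).smul_const v).const_add x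
    have hfx' : HasFDerivAt f (fderiv ℂ f x) (x + (0 : ℂ) • v) := by
      simpa using hfx.hasFDerivAt
    exact hfx'.comp_hasDerivAt 0 hline
  have := Complex.norm_deriv_le_of_forall_mem_sphere_norm_le (by positivity) hslice
    fun ζ hζ => hC _ (hmaps (Metric.sphere_subset_closedBall hζ))
  rw [hderiv.deriv] at this
  calc ‖fderiv ℂ f x v‖ ≤ C / (r / ‖v‖) := this
    _ = C / r * ‖v‖ := by field_simp

theorem differentiableOn_of_tendstoLocallyUniformlyOn [ProperSpace E] [CompleteSpace F]
    {ψ : ℕ → E → F} {g : E → F} {U : Set E} (hU : IsOpen U)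
    (hψ : ∀ m, DifferentiableOn ℂ (ψ m) U) (hlim : TendstoLocallyUniformlyOn ψ g atTop U) :
    DifferentiableOn ℂ g U := by
  intro x hx
  obtain ⟨ε, hε, hball⟩ := Metric.isOpen_iff.mp hU x hx
  set r := ε / 3
  have hr : 0 < r := by positivity
  have hsub : ∀ y ∈ Metric.ball x r, Metric.closedBall y r ⊆ Metric.closedBall x (2 * r) := by
    intro y hy
    refine Metric.closedBall_subset_closedBall' ?_
    linarith [Metric.mem_ball.mp hy]
  have hxU : Metric.closedBall x (2 * r) ⊆ U :=
    (Metric.closedBall_subset_ball (by simp only [r]; linarith)).trans hball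
  have hrU : Metric.ball x r ⊆ Metric.closedBall x (2 * r) :=
    Metric.ball_subset_closedBall.trans (Metric.closedBall_subset_closedBall (by linarith))
  have hψg : TendstoUniformlyOn ψ g atTop (Metric.closedBall x (2 * r)) :=
    (tendstoLocallyUniformlyOn_iff_forall_isCompact hU).mp hlim _ hxU (isCompact_closedBall _ _)
  -- Cauchy's estimates turn uniform convergence on `closedBall x (2r)` into uniform convergence
  -- of the derivatives on `ball x r`
  have hcauchy : UniformCauchySeqOn (fun m => fderiv ℂ (ψ m)) atTop (Metric.ball x r) := by
    rw [Metric.uniformCauchySeqOn_iff]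
    intro δ hδ
    obtain ⟨N, hN⟩ := Metric.uniformCauchySeqOn_iff.mp hψg.uniformCauchySeqOn (δ * r / 2)
      (by positivity)
    refine ⟨N, fun m hm l hl y hy => ?_⟩
    have hyU : Metric.closedBall y r ⊆ U := (hsub y hy).trans hxU
    have hdiff : ∀ k, DifferentiableAt ℂ (ψ k) y := fun k =>
      (hψ k).differentiableAt (hU.mem_nhds (hyU (Metric.mem_closedBall_self hr.le)))
    rw [dist_eq_norm, ← fderiv_sub (hdiff m) (hdiff l)]
    calc ‖fderiv ℂ (ψ m - ψ l) y‖ ≤ δ * r / 2 / r :=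
          norm_fderiv_le_of_forall_mem_closedBall_norm_le hr (((hψ m).sub (hψ l)).mono hyU)
            fun w hw => by
              simpa [dist_eq_norm] using (hN m hm l hl w (hsub y hy hw)).le
      _ < δ := by field_simp; linarith
  have hlim' : ∀ y ∈ Metric.ball x r,
      Tendsto (fun m => fderiv ℂ (ψ m) y) atTop (𝓝 (limUnder atTop fun m => fderiv ℂ (ψ m) y)) :=
    fun y hy => (hcauchy.cauchySeq hy).tendsto_limUnder
  have hderiv := hasFDerivAt_of_tendstoUniformlyOn Metric.isOpen_ball
    (hcauchy.tendstoUniformlyOn_of_tendsto hlim')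
    (fun m y hy => ((hψ m).differentiableAt (hU.mem_nhds (hxU (hrU hy)))).hasFDerivAt)
    (fun y hy => hψg.tendsto_at (hrU hy))
    (Metric.mem_ball_self hr)
  exact hderiv.differentiableAt.differentiableWithinAt
end


theorem LowerSemicontinuousOn.exists_eventually_le {X : Type*} [TopologicalSpace X]
    [BaireSpace X] {f : X → ℝ} {s : Set X} (hs : IsOpen s) (hne : s.Nonempty)
    (hf : LowerSemicontinuousOn f s) : ∃ x ∈ s, ∃ M : ℝ, ∀ᶠ y in 𝓝 x, f y ≤ M := by
  have := hs.baireSpace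
  have := hne.to_subtype
  have hclosed : ∀ M : ℕ, IsClosed (s.domRestrict f ⁻¹' Iic (M : ℝ)) := fun M =>
    (lowerSemicontinuous_restrict_iff.mpr hf).isClosed_preimage M
  have hcover : ⋃ M : ℕ, s.domRestrict f ⁻¹' Iic (M : ℝ) = univ :=
    eq_univ_of_forall fun y => mem_iUnion.mpr (exists_nat_ge (f y))
  obtain ⟨M, y, hy⟩ := nonempty_interior_of_iUnion_of_closed hclosed hcover
  refine ⟨y, y.2, M, ?_⟩
  rw [← hs.isOpenEmbedding_subtypeVal.map_nhds_eq, eventually_map]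
  exact Filter.mem_of_superset (isOpen_interior.mem_nhds hy) interior_subset

theorem exists_strictMono_cauchySeq_of_forall_approx {ι α β : Type*} [Countable ι]
    [PseudoMetricSpace β] {g : ℕ → α → β} {q : ι → α} {K : Set β} (hK : IsCompact K)
    (hgK : ∀ j i, g j (q i) ∈ K) {A : Set α}
    (happrox : ∀ x ∈ A, ∀ ε > 0, ∃ i, ∀ j, dist (g j x) (g j (q i)) < ε) :
    ∃ ns : ℕ → ℕ, StrictMono ns ∧ ∀ x ∈ A, CauchySeq fun k => g (ns k) x := by
  obtain ⟨a, -, ns, hns, hlim⟩ := (isCompact_univ_pi fun _ : ι => hK).tendsto_subseq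
    (x := fun j i => g j (q i)) fun j i _ => hgK j i
  refine ⟨ns, hns, fun x hx => Metric.cauchySeq_iff'.mpr fun ε hε => ?_⟩
  obtain ⟨i, hi⟩ := happrox x hx (ε / 3) (by positivity)
  obtain ⟨N, hN⟩ := Metric.cauchySeq_iff'.mp (tendsto_pi_nhds.mp hlim i).cauchySeq (ε / 3)
    (by positivity)
  refine ⟨N, fun k hk => ?_⟩
  calc dist (g (ns k) x) (g (ns N) x)
      ≤ dist (g (ns k) x) (g (ns k) (q i)) + dist (g (ns k) (q i)) (g (ns N) (q i))
        + dist (g (ns N) (q i)) (g (ns N) x) := dist_triangle4 _ _ _ _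
    _ < ε / 3 + ε / 3 + ε / 3 := by
        gcongr
        · exact hi _
        · exact hN k hk
        · rw [dist_comm]; exact hi _
    _ = ε := by ring

section
variable {α : Type*} [MeasurableSpace α] {μ : Measure α}

theorem tendsto_integral_norm_mul_sub_mul_sq {E : Type*} [NormedRing E] {g : ℕ → α → E}
    {v f : α → E} {M : ℝ} (hg : ∀ k, AEStronglyMeasurable (g k) μ)
    (hgM : ∀ k, ∀ᵐ a ∂μ, ‖g k a‖ ≤ M) (hv : AEStronglyMeasurable v μ)
    (hvM : ∀ᵐ a ∂μ, ‖v a‖ ≤ M) (hlim : ∀ᵐ a ∂μ, Tendsto (fun k => g k a) atTop (𝓝 (v a)))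
    (hf : MemLp f 2 μ) :
    Tendsto (fun k => ∫ a, ‖g k a * f a - v a * f a‖ ^ 2 ∂μ) atTop (𝓝 0) := by
  have hbound : Integrable (fun a => (2 * M) ^ 2 * ‖f a‖ ^ 2) μ :=
    ((memLp_two_iff_integrable_sq_norm hf.1).mp hf).const_mul _
  have := tendsto_integral_of_dominated_convergence
    (F := fun k a => ‖g k a * f a - v a * f a‖ ^ 2) (f := fun _ => 0) _
    (fun k => (((hg k).mul hf.1).sub (hv.mul hf.1)).norm.pow 2) hbound
    (fun k => by
      filter_upwards [hgM k, hvM] with a hga hva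
      rw [norm_pow, norm_norm, ← sub_mul, ← mul_pow]
      gcongr
      calc ‖(g k a - v a) * f a‖ ≤ ‖g k a - v a‖ * ‖f a‖ := norm_mul_le _ _
        _ ≤ 2 * M * ‖f a‖ := by
          gcongr
          linarith [norm_sub_le (g k a) (v a)])
    (by
      filter_upwards [hlim] with a ha
      simpa using (((ha.mul_const (f a)).sub_const (v a * f a)).norm.pow 2))
  rwa [integral_zero] at this

theorem MeasureTheory.Lp.sqrt_integral_norm_sq {E : Type*} [NormedAddCommGroup E]
    [InnerProductSpace ℂ E] (γ : Lp E 2 μ) : Real.sqrt (∫ a, ‖γ a‖ ^ 2 ∂μ) = ‖γ‖ := by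
  rw [← Real.sqrt_sq (norm_nonneg γ), @norm_sq_eq_re_inner ℂ, L2.inner_def, ← integral_re]
  · simp [inner_self_eq_norm_sq_to_K, ← Complex.ofReal_pow]
  · exact L2.integrable_inner γ γ

end

namespace BergmanTypeSpace

variable {n : ℕ} (S : BergmanTypeSpace n)

theorem ae_mem_Ω : ∀ᵐ w ∂S.σ, w ∈ S.Ω :=
  mem_ae_iff.mpr S.σ_carried

theorem nrm_congr_ae {f g : Cn n → ℂ} (h : f =ᵐ[S.σ] g) : S.nrm f = S.nrm g := by
  unfold nrm
  rw [integral_congr_ae (h.mono fun w hw => by rw [hw])]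

theorem nrm_coeFn (γ : Lp ℂ 2 S.σ) : S.nrm γ = ‖γ‖ :=
  Lp.sqrt_integral_norm_sq γ

theorem nrm_eq_norm_toLp {f : Cn n → ℂ} (hf : MemLp f 2 S.σ) : S.nrm f = ‖hf.toLp f‖ := by
  rw [← S.nrm_coeFn, S.nrm_congr_ae hf.coeFn_toLp]

theorem inn_congr_ae {f₁ f₂ : Cn n → ℂ} (h : f₁ =ᵐ[S.σ] f₂) (g : Cn n → ℂ) :
    S.inn f₁ g = S.inn f₂ g :=
  integral_congr_ae (h.mono fun w hw => by simp only [hw])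

theorem K_apply_eq_inn {z x : Cn n} (hz : z ∈ S.Ω) (hx : x ∈ S.Ω) :
    S.K z x = S.inn (S.K z) (S.K x) :=
  S.K_reproducing (S.K z) (S.K_holo z hz) (S.K_memL2 z hz) x hx

theorem K_apply_comm {z x : Cn n} (hz : z ∈ S.Ω) (hx : x ∈ S.Ω) :
    S.K z x = starRingEnd ℂ (S.K x z) := by
  rw [S.K_apply_eq_inn hz hx, S.K_apply_eq_inn hx hz, inn, inn, ← integral_conj]
  simp only [map_mul, Complex.conj_conj, mul_comm]

open scoped Classical in
/-- `K_x` as an element of `L²(σ)`; `0` off `Ω`, where `K_x` need not be square integrable. -/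
def kernel (x : Cn n) : Lp ℂ 2 S.σ :=
  if hx : x ∈ S.Ω then (S.K_memL2 x hx).toLp (S.K x) else 0

theorem kernel_of_mem {x : Cn n} (hx : x ∈ S.Ω) :
    S.kernel x = (S.K_memL2 x hx).toLp (S.K x) := by
  simp [kernel, hx]

theorem coeFn_kernel {x : Cn n} (hx : x ∈ S.Ω) : S.kernel x =ᵐ[S.σ] S.K x := by
  rw [S.kernel_of_mem hx]
  exact (S.K_memL2 x hx).coeFn_toLp

theorem inner_kernel {x : Cn n} (hx : x ∈ S.Ω) (γ : Lp ℂ 2 S.σ) :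
    inner ℂ (S.kernel x) γ = S.inn γ (S.K x) := by
  rw [L2.inner_def, inn]
  refine integral_congr_ae ?_
  filter_upwards [S.coeFn_kernel hx] with w hw
  rw [RCLike.inner_apply, hw, mul_comm]

theorem inner_kernel_kernel {x y : Cn n} (hx : x ∈ S.Ω) (hy : y ∈ S.Ω) :
    inner ℂ (S.kernel x) (S.kernel y) = S.K y x := by
  rw [S.inner_kernel hx, S.inn_congr_ae (S.coeFn_kernel hy), ← S.K_apply_eq_inn hy hx]

theorem norm_kernel {x : Cn n} (hx : x ∈ S.Ω) : ‖S.kernel x‖ = S.Knorm x := by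
  rw [← S.nrm_coeFn, S.nrm_congr_ae (S.coeFn_kernel hx), S.Knorm_def]
  rfl

theorem norm_K_le {x y : Cn n} (hx : x ∈ S.Ω) (hy : y ∈ S.Ω) :
    ‖S.K y x‖ ≤ S.Knorm x * S.Knorm y := by
  rw [← S.inner_kernel_kernel hx hy, ← S.norm_kernel hx, ← S.norm_kernel hy]
  exact norm_inner_le_norm _ _

theorem norm_K_self {x : Cn n} (hx : x ∈ S.Ω) : ‖S.K x x‖ = S.Knorm x ^ 2 := by
  rw [← S.inner_kernel_kernel hx hx, inner_self_eq_norm_sq_to_K, S.norm_kernel hx]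
  simp

/-- `‖K_x‖` is the supremum over `y` of the continuous functions `x ↦ |K_y(x)| / ‖K_y‖`,
attained at `y = x`. -/
theorem lowerSemicontinuousOn_Knorm : LowerSemicontinuousOn S.Knorm S.Ω := by
  intro x hx c hc
  have hpos := S.Knorm_pos x hx
  have hcont : ContinuousAt (fun y => ‖S.K x y‖ / S.Knorm x) x :=
    ((S.K_holo x hx).continuousOn.continuousAt (S.isOpen_domain.mem_nhds hx)).norm.div_const _
  have hdiag : ‖S.K x x‖ / S.Knorm x = S.Knorm x := by
    rw [S.norm_K_self hx, sq, mul_div_cancel_right₀ _ hpos.ne']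
  filter_upwards [self_mem_nhdsWithin,
    nhdsWithin_le_nhds (hcont.eventually (lt_mem_nhds (hdiag ▸ hc)))] with y hy hlt
  exact hlt.trans_le ((div_le_iff₀ hpos).mpr (S.norm_K_le hy hx))

theorem Knorm_φ_mul_norm_K (hS : S.IsStrong) {z w : Cn n} (hz : z ∈ S.Ω) (hw : w ∈ S.Ω) :
    S.Knorm (S.φ z w) * ‖S.K z w‖ = S.Knorm z * S.Knorm w := by
  have h := hS.2.2 z hz w hw
  have hk : S.inn (S.k z) (S.k w) = S.K z w / ((S.Knorm z : ℂ) * (S.Knorm w : ℂ)) := by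
    rw [S.K_apply_eq_inn hz hw, inn, inn, ← integral_div]
    refine integral_congr_ae (Eventually.of_forall fun u => ?_)
    simp only [S.k_def, map_div₀, Complex.conj_ofReal, div_mul_div_comm]
  have hz' := S.Knorm_pos z hz
  have hw' := S.Knorm_pos w hw
  have hφ := S.Knorm_pos _ (S.φ_mapsTo z hz hw)
  rw [hk, norm_div, norm_mul, Complex.norm_real, Complex.norm_real, Real.norm_of_nonneg hz'.le,
    Real.norm_of_nonneg hw'.le] at h
  field_simp at h
  linarith

theorem K_ne_zero (hS : S.IsStrong) {z w : Cn n} (hz : z ∈ S.Ω) (hw : w ∈ S.Ω) :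
    S.K z w ≠ 0 := by
  intro h
  have := S.Knorm_φ_mul_norm_K hS hz hw
  rw [h, norm_zero, mul_zero] at this
  exact (mul_pos (S.Knorm_pos z hz) (S.Knorm_pos w hw)).ne this

/-- By A.5 with equality, `‖K_y‖ = ‖K_a‖ ‖K_{φ_a(y)}‖ / |K_a(φ_a(y))|`, and the denominator
stays away from `0` near `c`. -/
theorem exists_eventually_Knorm_le_of_φ (hS : S.IsStrong) {a c : Cn n} (ha : a ∈ S.Ω)
    (hc : c ∈ S.Ω) {M : ℝ} (hM : ∀ᶠ y in 𝓝 (S.φ a c), S.Knorm y ≤ M) :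
    ∃ M' : ℝ, ∀ᶠ y in 𝓝 c, S.Knorm y ≤ M' := by
  have hφc := S.φ_mapsTo a ha hc
  have hKc : 0 < ‖S.K a (S.φ a c)‖ := norm_pos_iff.mpr (S.K_ne_zero hS ha hφc)
  set δ := ‖S.K a (S.φ a c)‖ / 2
  have hδ : 0 < δ := half_pos hKc
  have hφ : ContinuousAt (S.φ a) c :=
    (S.φ_holo a ha).continuousOn.continuousAt (S.isOpen_domain.mem_nhds hc)
  have hK : ∀ᶠ y in 𝓝 c, δ < ‖S.K a (S.φ a y)‖ :=
    hφ.eventually (((S.K_holo a ha).continuousOn.continuousAt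
      (S.isOpen_domain.mem_nhds hφc)).norm.eventually (lt_mem_nhds (half_lt_self hKc)))
  refine ⟨S.Knorm a * M / δ, ?_⟩
  filter_upwards [S.isOpen_domain.mem_nhds hc, hφ.eventually hM, hK] with y hy hyM hyδ
  have hφy := S.φ_mapsTo a ha hy
  have hid := S.Knorm_φ_mul_norm_K hS ha hφy
  rw [S.φ_invol a ha y hy] at hid
  rw [le_div_iff₀ hδ]
  calc S.Knorm y * δ ≤ S.Knorm y * ‖S.K a (S.φ a y)‖ := by
        gcongr; exact (S.Knorm_pos y hy).le
    _ = S.Knorm a * S.Knorm (S.φ a y) := hid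
    _ ≤ S.Knorm a * M := by gcongr; exact (S.Knorm_pos a ha).le

theorem exists_eventually_Knorm_le (hS : S.IsStrong) {x : Cn n} (hx : x ∈ S.Ω) :
    ∃ M : ℝ, ∀ᶠ y in 𝓝 x, S.Knorm y ≤ M := by
  obtain ⟨y, hy, M, hM⟩ :=
    S.lowerSemicontinuousOn_Knorm.exists_eventually_le S.isOpen_domain ⟨0, S.zero_mem⟩
  obtain ⟨M₀, hM₀⟩ :=
    S.exists_eventually_Knorm_le_of_φ hS hy S.zero_mem (M := M) (by rwa [S.φ_zero y hy])
  have hxx : S.φ x x = 0 := by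
    simpa only [S.φ_zero x hx] using S.φ_invol x hx 0 S.zero_mem
  exact S.exists_eventually_Knorm_le_of_φ hS hx hx (by rwa [hxx])

def closedKernelSpan : Submodule ℂ (Lp ℂ 2 S.σ) :=
  (Submodule.span ℂ (S.kernel '' S.Ω)).topologicalClosure

instance : CompleteSpace S.closedKernelSpan :=
  (Submodule.isClosed_topologicalClosure _).completeSpace_coe

theorem kernel_mem_closedKernelSpan (x : Cn n) : S.kernel x ∈ S.closedKernelSpan := by
  by_cases hx : x ∈ S.Ω
  · exact Submodule.le_topologicalClosure _ (Submodule.subset_span ⟨x, hx, rfl⟩)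
  · simp [kernel, hx]

theorem inner_kernel_starProjection (x : Cn n) (γ : Lp ℂ 2 S.σ) :
    inner ℂ (S.kernel x) (S.closedKernelSpan.starProjection γ) = inner ℂ (S.kernel x) γ := by
  rw [← Submodule.inner_starProjection_left_eq_right,
    Submodule.starProjection_eq_self_iff.mpr (S.kernel_mem_closedKernelSpan x)]

theorem differentiableOn_inner_kernel_and_ae_eq_of_mem_span {b : Lp ℂ 2 S.σ}
    (hb : b ∈ Submodule.span ℂ (S.kernel '' S.Ω)) :
    DifferentiableOn ℂ (fun x => inner ℂ (S.kernel x) b) S.Ω ∧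
      (fun x => inner ℂ (S.kernel x) b) =ᵐ[S.σ] b := by
  induction hb using Submodule.span_induction with
  | mem b hb =>
    obtain ⟨y, hy, rfl⟩ := hb
    refine ⟨(S.K_holo y hy).congr fun x hx => S.inner_kernel_kernel hx hy, ?_⟩
    filter_upwards [S.ae_mem_Ω, S.coeFn_kernel hy] with x hx hxy
    rw [S.inner_kernel_kernel hx hy, hxy]
  | zero =>
    refine ⟨by simp, ?_⟩
    filter_upwards [Lp.coeFn_zero ℂ 2 S.σ] with x hx
    rw [inner_zero_right, hx, Pi.zero_apply]
  | add b₁ b₂ _ _ h₁ h₂ =>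
    refine ⟨by simpa only [inner_add_right] using h₁.1.fun_add h₂.1, ?_⟩
    filter_upwards [h₁.2, h₂.2, Lp.coeFn_add b₁ b₂] with x hx₁ hx₂ hx
    rw [inner_add_right, hx, Pi.add_apply, hx₁, hx₂]
  | smul c b _ h =>
    refine ⟨by simpa only [inner_smul_right] using h.1.const_mul c, ?_⟩
    filter_upwards [h.2, Lp.coeFn_smul c b] with x hxb hx
    rw [inner_smul_right, hx, Pi.smul_apply, hxb, smul_eq_mul]

theorem exists_tendsto_of_mem_closedKernelSpan {β : Lp ℂ 2 S.σ} (hβ : β ∈ S.closedKernelSpan) :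
    ∃ b : ℕ → Lp ℂ 2 S.σ, (∀ m, b m ∈ Submodule.span ℂ (S.kernel '' S.Ω)) ∧
      Tendsto b atTop (𝓝 β) :=
  mem_closure_iff_seq_limit.mp hβ

theorem inner_kernel_ae_eq {β : Lp ℂ 2 S.σ} (hβ : β ∈ S.closedKernelSpan) :
    (fun x => inner ℂ (S.kernel x) β) =ᵐ[S.σ] β := by
  obtain ⟨b, hbspan, hb⟩ := S.exists_tendsto_of_mem_closedKernelSpan hβ
  obtain ⟨ns, hns, hae⟩ := (tendstoInMeasure_of_tendsto_Lp hb).exists_seq_tendsto_ae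
  filter_upwards [hae, ae_all_iff.mpr fun m =>
    (S.differentiableOn_inner_kernel_and_ae_eq_of_mem_span (hbspan m)).2] with x hx hbx
  refine tendsto_nhds_unique ?_ hx
  exact (tendsto_const_nhds.inner (hb.comp hns.tendsto_atTop)).congr fun k => hbx (ns k)

theorem tendstoLocallyUniformlyOn_inner_kernel (hS : S.IsStrong) {b : ℕ → Lp ℂ 2 S.σ}
    {β : Lp ℂ 2 S.σ} (hb : Tendsto b atTop (𝓝 β)) :
    TendstoLocallyUniformlyOn (fun m x => inner ℂ (S.kernel x) (b m))
      (fun x => inner ℂ (S.kernel x) β) atTop S.Ω := by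
  rw [Metric.tendstoLocallyUniformlyOn_iff]
  intro ε hε x hx
  obtain ⟨M, hM⟩ := S.exists_eventually_Knorm_le hS hx
  have hM' : ∀ᶠ y in 𝓝 x, ‖S.kernel y‖ ≤ M := by
    filter_upwards [hM, S.isOpen_domain.mem_nhds hx] with y hyM hy
    rwa [S.norm_kernel hy]
  have hM0 : 0 ≤ M := (norm_nonneg _).trans hM'.self_of_nhds
  have hclose : ∀ᶠ m in atTop, ‖β - b m‖ < ε / (M + 1) := by
    have := (tendsto_iff_norm_sub_tendsto_zero.mp hb).eventually (gt_mem_nhds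
      (show 0 < ε / (M + 1) by positivity))
    simpa only [norm_sub_rev] using this
  refine ⟨_, mem_nhdsWithin_of_mem_nhds hM', ?_⟩
  filter_upwards [hclose] with m hm y hy
  rw [dist_eq_norm, ← inner_sub_right]
  calc ‖inner ℂ (S.kernel y) (β - b m)‖ ≤ ‖S.kernel y‖ * ‖β - b m‖ := norm_inner_le_norm _ _
    _ ≤ M * (ε / (M + 1)) := by gcongr
    _ < ε := by
        rw [mul_div_assoc', div_lt_iff₀ (by positivity)]
        nlinarith

theorem differentiableOn_inner_kernel (hS : S.IsStrong) (γ : Lp ℂ 2 S.σ) :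
    DifferentiableOn ℂ (fun x => inner ℂ (S.kernel x) γ) S.Ω := by
  simp_rw [← S.inner_kernel_starProjection _ γ]
  obtain ⟨b, hbspan, hb⟩ :=
    S.exists_tendsto_of_mem_closedKernelSpan (Submodule.starProjection_apply_mem _ γ)
  exact differentiableOn_of_tendstoLocallyUniformlyOn S.isOpen_domain
    (fun m => (S.differentiableOn_inner_kernel_and_ae_eq_of_mem_span (hbspan m)).1)
    (S.tendstoLocallyUniformlyOn_inner_kernel hS hb)

theorem P_apply {x : Cn n} (hx : x ∈ S.Ω) (h : Cn n → ℂ) : S.P h x = S.inn h (S.K x) := by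
  refine integral_congr_ae ?_
  filter_upwards [S.ae_mem_Ω] with w hw
  rw [← S.K_apply_eq_inn hw hx, S.K_apply_comm hw hx, mul_comm]

theorem P_apply_eq_inner {h : Cn n → ℂ} (hh : MemLp h 2 S.σ) {x : Cn n} (hx : x ∈ S.Ω) :
    S.P h x = inner ℂ (S.kernel x) (hh.toLp h) := by
  rw [S.P_apply hx, S.inner_kernel hx, S.inn_congr_ae hh.coeFn_toLp]

theorem P_sub {h₁ h₂ : Cn n → ℂ} (hh₁ : MemLp h₁ 2 S.σ) (hh₂ : MemLp h₂ 2 S.σ) {x : Cn n}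
    (hx : x ∈ S.Ω) : S.P (h₁ - h₂) x = S.P h₁ x - S.P h₂ x := by
  rw [S.P_apply_eq_inner (hh₁.sub hh₂) hx, S.P_apply_eq_inner hh₁ hx, S.P_apply_eq_inner hh₂ hx,
    MemLp.toLp_sub, inner_sub_right]

theorem P_ae_eq_starProjection {h : Cn n → ℂ} (hh : MemLp h 2 S.σ) :
    S.P h =ᵐ[S.σ] S.closedKernelSpan.starProjection (hh.toLp h) := by
  filter_upwards [S.ae_mem_Ω,
    S.inner_kernel_ae_eq (Submodule.starProjection_apply_mem _ (hh.toLp h))] with x hx hx'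
  rw [S.P_apply_eq_inner hh hx, ← S.inner_kernel_starProjection, hx']

theorem memB_P (hS : S.IsStrong) {h : Cn n → ℂ} (hh : MemLp h 2 S.σ) : S.memB (S.P h) :=
  ⟨(S.differentiableOn_inner_kernel hS _).congr fun _ hx => S.P_apply_eq_inner hh hx,
    (Lp.memLp _).ae_eq (S.P_ae_eq_starProjection hh).symm⟩

theorem nrm_P_le {h : Cn n → ℂ} (hh : MemLp h 2 S.σ) : S.nrm (S.P h) ≤ S.nrm h := by
  rw [S.nrm_congr_ae (S.P_ae_eq_starProjection hh), S.nrm_coeFn, S.nrm_eq_norm_toLp hh]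
  exact Submodule.norm_starProjection_apply_le _ _

theorem memB_toeplitz (hS : S.IsStrong) {g f : Cn n → ℂ} (hg : AEStronglyMeasurable g S.σ)
    {M : ℝ} (hgM : ∀ᵐ w ∂S.σ, ‖g w‖ ≤ M) (hf : MemLp f 2 S.σ) : S.memB (S.toeplitz g f) :=
  S.memB_P hS (hf.mul' (memLp_top_of_bound hg M hgM))

theorem tendsto_nrm_toeplitz_sub {g : ℕ → Cn n → ℂ} {v f : Cn n → ℂ} {M : ℝ}
    (hg : ∀ k, AEStronglyMeasurable (g k) S.σ) (hgM : ∀ k, ∀ᵐ w ∂S.σ, ‖g k w‖ ≤ M)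
    (hv : AEStronglyMeasurable v S.σ) (hvM : ∀ᵐ w ∂S.σ, ‖v w‖ ≤ M)
    (hlim : ∀ᵐ w ∂S.σ, Tendsto (fun k => g k w) atTop (𝓝 (v w))) (hf : MemLp f 2 S.σ) :
    Tendsto (fun k => S.nrm fun x => S.toeplitz (g k) f x - S.toeplitz v f x) atTop (𝓝 0) := by
  have hgf k : MemLp (fun w => g k w * f w) 2 S.σ := hf.mul' (memLp_top_of_bound (hg k) M (hgM k))
  have hvf : MemLp (fun w => v w * f w) 2 S.σ := hf.mul' (memLp_top_of_bound hv M hvM)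
  have hle k : S.nrm (fun x => S.toeplitz (g k) f x - S.toeplitz v f x)
      ≤ S.nrm fun w => g k w * f w - v w * f w := by
    calc S.nrm (fun x => S.toeplitz (g k) f x - S.toeplitz v f x)
        = S.nrm (S.P ((fun w => g k w * f w) - fun w => v w * f w)) :=
          S.nrm_congr_ae (S.ae_mem_Ω.mono fun x hx => (S.P_sub (hgf k) hvf hx).symm)
      _ ≤ _ := S.nrm_P_le ((hgf k).sub hvf)
  refine squeeze_zero (fun k => Real.sqrt_nonneg _) hle ?_
  simpa [nrm, Function.comp_def] using (Real.continuous_sqrt.tendsto 0).comp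
    (tendsto_integral_norm_mul_sub_mul_sq hg hgM hv hvM hlim hf)

theorem aestronglyMeasurable_comp_φ {u : Cn n → ℂ} (hu : Measurable u) {z : Cn n}
    (hz : z ∈ S.Ω) : AEStronglyMeasurable (fun w => u (S.φ z w)) S.σ := by
  rw [← Measure.restrict_eq_self_of_ae_mem S.ae_mem_Ω]
  exact (hu.comp_aemeasurable ((S.φ_holo z hz).continuousOn.aemeasurable
    S.isOpen_domain.measurableSet)).aestronglyMeasurable

theorem exists_strictMono_tendsto_comp_φ (hS : S.IsStrong) {u : Cn n → ℂ}
    (hu : S.IsBUCSymbol u) {z : ℕ → Cn n} (hz : ∀ j, z j ∈ S.Ω) :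
    ∃ ns : ℕ → ℕ, StrictMono ns ∧ ∃ v : Cn n → ℂ,
      ∀ w ∈ S.Ω, Tendsto (fun k => u (S.φ (z (ns k)) w)) atTop (𝓝 (v w)) := by
  obtain ⟨s, hs, hsΩ, hsdense⟩ := S.d_separable
  have := hs.to_subtype
  obtain ⟨M, hM⟩ := hu.1.2
  obtain ⟨ns, hns, hcauchy⟩ := exists_strictMono_cauchySeq_of_forall_approx
    (g := fun j w => u (S.φ (z j) w)) (q := ((↑) : s → Cn n)) (A := S.Ω)
    (isCompact_closedBall (0 : ℂ) M)
    (fun j i => mem_closedBall_zero_iff.mpr (hM _ (S.φ_mapsTo _ (hz j) (hsΩ i.2))))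
    fun w hw ε hε => by
      obtain ⟨δ, hδ, huδ⟩ := hu.2 ε hε
      obtain ⟨y, hys, hy⟩ := hsdense w hw δ hδ
      refine ⟨⟨y, hys⟩, fun j => ?_⟩
      rw [dist_eq_norm]
      refine huδ _ (S.φ_mapsTo _ (hz j) hw) _ (S.φ_mapsTo _ (hz j) (hsΩ hys)) ?_
      rwa [hS.1 (z j) (hz j) w hw y (hsΩ hys)]
  exact ⟨ns, hns, fun w => limUnder atTop fun k => u (S.φ (z (ns k)) w),
    fun w hw => (hcauchy w hw).tendsto_limUnder⟩

end BergmanTypeSpace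

/-- for `u ∈ BUC(Ω,d)` and any sequence `{z_m}` in `Ω`, the sequence of
Toeplitz operators `T_{u∘φ_{z_m}}` has a subnet converging in the strong operator
topology; equivalently, it has a cluster point `B` in SOT. -/
theorem statement19 (n : ℕ) (S : BergmanTypeSpace n) (hS : S.IsStrong)
    (u : Cn n → ℂ) (hu : S.IsBUCSymbol u)
    (z : ℕ → Cn n) (hz : ∀ m, z m ∈ S.Ω) :
    ∃ B : (Cn n → ℂ) → (Cn n → ℂ),
      Set.MapsTo B {f | S.memB f} {f | S.memB f} ∧
      ∀ (m : ℕ) (fs : Fin m → (Cn n → ℂ)), (∀ i, S.memB (fs i)) →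
        ∀ ε : ℝ, 0 < ε → ∀ N : ℕ, ∃ j ≥ N, ∀ i,
          S.nrm (fun x =>
            S.toeplitz (fun w => u (S.φ (z j) w)) (fs i) x - B (fs i) x) < ε := by
  obtain ⟨M, hM⟩ := hu.1.2
  have hgM : ∀ j, ∀ᵐ w ∂S.σ, ‖u (S.φ (z j) w)‖ ≤ M := fun j =>
    S.ae_mem_Ω.mono fun w hw => hM _ (S.φ_mapsTo _ (hz j) hw)
  obtain ⟨ns, hns, v, hv⟩ := S.exists_strictMono_tendsto_comp_φ hS hu hz
  have hlim := S.ae_mem_Ω.mono hv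
  have hvm := aestronglyMeasurable_of_tendsto_ae _
    (fun k => S.aestronglyMeasurable_comp_φ hu.1.1 (hz (ns k))) hlim
  have hvM : ∀ᵐ w ∂S.σ, ‖v w‖ ≤ M := by
    filter_upwards [hlim, ae_all_iff.mpr hgM] with w hw hwM
    exact le_of_tendsto' hw.norm fun k => hwM (ns k)
  refine ⟨S.toeplitz v, fun f hf => S.memB_toeplitz hS hvm hvM hf.2, fun m fs hfs ε hε N => ?_⟩
  have hconv i := (S.tendsto_nrm_toeplitz_sub
    (fun k => S.aestronglyMeasurable_comp_φ hu.1.1 (hz (ns k))) (fun k => hgM (ns k)) hvm hvM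
    hlim (hfs i).2).eventually (gt_mem_nhds hε)
  obtain ⟨k, hk, hkN⟩ := ((eventually_all.mpr hconv).and (eventually_ge_atTop N)).exists
  exact ⟨ns k, hkN.trans (hns.id_le k), hk⟩
end
end
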